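/- arXiv:2312.08538 — 3 statements merged into one kernel-verified Lean document; each statement's English description precedes it below -/
import Mathlib

section
/- Under the iConEF-v2 algorithm (p_t^i = η g_t^i + ẽ_t^i + q_t^i; Δ_t^i = Q(p_t^i); x_{t+1} = x_t − (1/N)Σ_i Δ_t^i; ẽ_{t+1}^i = Q(p_t^i − Δ_t^i); q_{t+1}^i = C(p_t^i − Δ_t^i − ẽ_{t+1}^i); ẽ_0^i = q_0^i = 0), with stochastic gradients satisfying E[g_t^i | x_t] = ∇f(x_t), E[||g_t^i − ∇f(x_t)||² | x_t] ≤ σ², E[||∇f(x_t)||²] ≤ G², conditionally independent across the N workers, error compressor C unbiased with E[||C(x) − x||² | x] ≤ θ||x||², and gradient compressor Q satisfying E[||Q(x) − x||² | x] ≤ δ||x||² where δ = c/((1+λ)(1+√θ)²) for some c ∈ (0,1), λ > 0: defining ζ_t^i = (ẽ_{t+1}^i + q_{t+1}^i) − p_t^i + Δ_t^i, it holds for every t that E[|| (1/N) Σ_{i=1}^N ζ_t^i ||²] ≤ ((1 − c + c/λ)/(1 − c)) · 2δ²θη²(σ² + G²)/N. -/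
/-!
With `a = p - Q p` and `b = a - Q a` one has `ẽ' + q' = Q a + C b = a + (C b - b)`, so the
residual `ζ = C b - b` only sees the unbiased error compressor. Given everything drawn before it,
`ζ_t^i` has mean zero and second moment at most `θ δ² E‖p_t^i‖²`, and residuals of different
workers are orthogonal, so `E‖(1/N) Σ ζ‖² = N⁻² Σ E‖ζ_t^i‖²`. By Young's inequality,
`E‖p‖² ≤ (1 + κ) E‖ẽ + q‖² + (1 + 1/κ) η² G² + η² σ²`, and the bound
`E‖ẽ_t + q_t‖² ≤ K := c η² (σ² + G²) / (λ (1 - c))` propagates in `t` because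
`(1 + θ δ) δ ≤ (1 + √θ)² δ = c / (1 + λ)`.

Conditioning is done by writing each quantity as a function of a state measurable with respect to
the past seeds and of the fresh seed, which is independent of it, and integrating the seed out.
-/

open MeasureTheory ProbabilityTheory
open scoped ENNReal BigOperators

namespace IConEF

section L2

variable {E : Type*} [NormedAddCommGroup E]

lemma ofReal_norm_sq (z : E) : ENNReal.ofReal (‖z‖ ^ 2) = (‖z‖₊ : ℝ≥0∞) ^ 2 := by
  rw [ENNReal.ofReal_pow (norm_nonneg z), ofReal_norm, enorm_eq_nnnorm]

lemma norm_add_sq_le_weighted {κ : ℝ} (hκ : 0 < κ) (a b : E) :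
    ‖a + b‖ ^ 2 ≤ (1 + κ) * ‖a‖ ^ 2 + (1 + 1 / κ) * ‖b‖ ^ 2 := by
  have hsq : 0 ≤ (κ * ‖a‖ - ‖b‖) ^ 2 / κ := by positivity
  have hexp : (κ * ‖a‖ - ‖b‖) ^ 2 / κ = κ * ‖a‖ ^ 2 + 1 / κ * ‖b‖ ^ 2 - 2 * ‖a‖ * ‖b‖ := by
    field_simp; ring
  nlinarith [norm_add_le a b, norm_nonneg (a + b), norm_nonneg a, norm_nonneg b]

variable {β : Type*} [MeasurableSpace β] {ν : Measure β}

lemma memLp_two_of_lintegral_nnnorm_sq_ne_top {v : β → E} (hv : AEStronglyMeasurable v ν)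
    (h : ∫⁻ s, (‖v s‖₊ : ℝ≥0∞) ^ 2 ∂ν ≠ ∞) : MemLp v 2 ν := by
  refine ⟨hv, ?_⟩
  rw [eLpNorm_eq_lintegral_rpow_enorm_toReal two_ne_zero ENNReal.ofNat_ne_top]
  simp only [enorm_eq_nnnorm, ENNReal.toReal_ofNat, ENNReal.rpow_two]
  exact ENNReal.rpow_lt_top_of_nonneg (by norm_num) h

lemma lintegral_nnnorm_sq_eq_ofReal_integral {v : β → E} (hv : MemLp v 2 ν) :
    ∫⁻ s, (‖v s‖₊ : ℝ≥0∞) ^ 2 ∂ν = ENNReal.ofReal (∫ s, ‖v s‖ ^ 2 ∂ν) := by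
  rw [ofReal_integral_eq_lintegral_ofReal (hv.integrable_norm_pow two_ne_zero)
    (Filter.Eventually.of_forall fun s => sq_nonneg _)]
  exact lintegral_congr fun s => (ofReal_norm_sq _).symm

/-- Pythagoras against constants: for a probability measure and square-integrable `Φ` this says
`∫ Φ ∂ν = 0`; unlike the integral, it passes through Tonelli's theorem without integrability side
conditions. -/
def IsCentered (ν : Measure β) (Φ : β → E) : Prop :=
  ∀ y : E, ∫⁻ s, (‖y + Φ s‖₊ : ℝ≥0∞) ^ 2 ∂ν = (‖y‖₊ : ℝ≥0∞) ^ 2 + ∫⁻ s, (‖Φ s‖₊ : ℝ≥0∞) ^ 2 ∂ν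

variable [InnerProductSpace ℝ E]

lemma nnnorm_smul_sq (r : ℝ) (z : E) :
    (‖r • z‖₊ : ℝ≥0∞) ^ 2 = ENNReal.ofReal (r ^ 2) * (‖z‖₊ : ℝ≥0∞) ^ 2 := by
  rw [← ofReal_norm_sq, ← ofReal_norm_sq, norm_smul, mul_pow, Real.norm_eq_abs, sq_abs,
    ENNReal.ofReal_mul (sq_nonneg r)]

variable [CompleteSpace E]

lemma isCentered_sub_integral [IsProbabilityMeasure ν] {v : β → E} (hv : MemLp v 2 ν) :
    IsCentered ν fun s => v s - ∫ s, v s ∂ν := by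
  intro y
  set m := ∫ s, v s ∂ν
  have hvm : MemLp (fun s => v s - m) 2 ν := hv.sub (memLp_const m)
  have hint : Integrable (fun s => v s - m) ν := hvm.integrable one_le_two
  have hmean : ∫ s, (v s - m) ∂ν = 0 := by
    rw [integral_sub (hv.integrable one_le_two) (integrable_const m), integral_const,
      probReal_univ, one_smul, sub_self]
  have hcross : ∫ s, 2 * inner ℝ y (v s - m) ∂ν = 0 := by
    rw [integral_const_mul, integral_inner hint, hmean, inner_zero_right, mul_zero]
  have hyvm : MemLp (fun s => y + (v s - m)) 2 ν := (memLp_const y).add hvm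
  dsimp only
  rw [lintegral_nnnorm_sq_eq_ofReal_integral hyvm,
    lintegral_nnnorm_sq_eq_ofReal_integral hvm, ← ofReal_norm_sq,
    ← ENNReal.ofReal_add (sq_nonneg _) (integral_nonneg fun _ => sq_nonneg _)]
  congr 1
  simp_rw [norm_add_sq_real]
  have hlin : Integrable (fun s => 2 * inner ℝ y (v s - m)) ν := (hint.const_inner y).const_mul 2
  have hconst_lin : Integrable (fun s => ‖y‖ ^ 2 + 2 * inner ℝ y (v s - m)) ν :=
    (integrable_const _).add hlin
  rw [integral_add hconst_lin (hvm.integrable_norm_pow two_ne_zero),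
    integral_add (integrable_const _) hlin, hcross, integral_const,
    probReal_univ, one_smul, add_zero]

end L2

section Independence

variable {Ω α β : Type*} [MeasurableSpace Ω] [MeasurableSpace α] [MeasurableSpace β]
  {μ : Measure Ω} {ν : Measure β}

lemma lintegral_comp_of_indepFun [IsFiniteMeasure μ] [SFinite ν] {X : Ω → α} {Y : Ω → β}
    (hX : Measurable X) (hY : Measurable Y) (hXY : IndepFun X Y μ) (hν : μ.map Y = ν)
    {F : α → β → ℝ≥0∞} (hF : Measurable (Function.uncurry F)) :
    ∫⁻ ω, F (X ω) (Y ω) ∂μ = ∫⁻ ω, ∫⁻ y, F (X ω) y ∂ν ∂μ := by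
  have hmap := (indepFun_iff_map_prod_eq_prod_map_map hX.aemeasurable hY.aemeasurable).mp hXY
  rw [hν] at hmap
  calc ∫⁻ ω, F (X ω) (Y ω) ∂μ
      = ∫⁻ z, Function.uncurry F z ∂(μ.map fun ω => (X ω, Y ω)) :=
        (lintegral_map hF (hX.prodMk hY)).symm
    _ = ∫⁻ x, ∫⁻ y, F x y ∂ν ∂(μ.map X) := by
      rw [hmap, lintegral_prod _ hF.aemeasurable]; rfl
    _ = ∫⁻ ω, ∫⁻ y, F (X ω) y ∂ν ∂μ := lintegral_map hF.lintegral_prod_right hX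

variable {E : Type*} [NormedAddCommGroup E] [MeasurableSpace E] [BorelSpace E]

lemma IsCentered.prod {β' : Type*} [MeasurableSpace β'] {ν' : Measure β'}
    [IsProbabilityMeasure ν] [SFinite ν'] {Φ : β × β' → E} (hΦ : Measurable Φ)
    (h : ∀ b, IsCentered ν' fun b' => Φ (b, b')) : IsCentered (ν.prod ν') Φ := by
  intro y
  rw [lintegral_prod _ ((hΦ.const_add y).nnnorm.coe_nnreal_ennreal.pow_const 2).aemeasurable,
    lintegral_prod _ (hΦ.nnnorm.coe_nnreal_ennreal.pow_const 2).aemeasurable]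
  simp_rw [h _ y]
  rw [lintegral_add_left measurable_const, lintegral_const, measure_univ, mul_one]

lemma IsCentered.lintegral_add_comp_of_indepFun [SecondCountableTopology E]
    [IsFiniteMeasure μ] [SFinite ν]
    {Z : Ω → E} {X : Ω → α} {Y : Ω → β} (hZ : Measurable Z) (hX : Measurable X)
    (hY : Measurable Y) (hXY : IndepFun (fun ω => (Z ω, X ω)) Y μ) (hν : μ.map Y = ν)
    {Φ : α → β → E} (hΦ : Measurable (Function.uncurry Φ)) (hc : ∀ a, IsCentered ν (Φ a)) :
    ∫⁻ ω, (‖Z ω + Φ (X ω) (Y ω)‖₊ : ℝ≥0∞) ^ 2 ∂μ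
      = ∫⁻ ω, (‖Z ω‖₊ : ℝ≥0∞) ^ 2 ∂μ + ∫⁻ ω, (‖Φ (X ω) (Y ω)‖₊ : ℝ≥0∞) ^ 2 ∂μ := by
  have hΦ' : Measurable fun q : (E × α) × β => Φ q.1.2 q.2 :=
    hΦ.comp (measurable_fst.snd.prodMk measurable_snd)
  rw [lintegral_comp_of_indepFun (F := fun za s => (‖za.1 + Φ za.2 s‖₊ : ℝ≥0∞) ^ 2)
      (hZ.prodMk hX) hY hXY hν
      ((measurable_fst.fst.add hΦ').nnnorm.coe_nnreal_ennreal.pow_const 2),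
    lintegral_comp_of_indepFun (F := fun a s => (‖Φ a s‖₊ : ℝ≥0∞) ^ 2) hX hY
      (hXY.comp measurable_snd measurable_id) hν (hΦ.nnnorm.coe_nnreal_ennreal.pow_const 2)]
  simp_rw [hc _ _]
  exact lintegral_add_left (hZ.nnnorm.coe_nnreal_ennreal.pow_const 2) _

end Independence

section SigmaOf

variable {ι Ω β : Type*} [mβ : MeasurableSpace β]

abbrev sigmaOf (X : ι → Ω → β) (T : Set ι) : MeasurableSpace Ω :=
  ⨆ k ∈ T, mβ.comap (X k)

variable {X : ι → Ω → β} {T T' : Set ι}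

lemma sigmaOf_le [mΩ : MeasurableSpace Ω] (hX : ∀ k, Measurable (X k)) : sigmaOf X T ≤ mΩ :=
  iSup₂_le fun k _ => (hX k).comap_le

lemma sigmaOf_mono (h : T ⊆ T') : sigmaOf X T ≤ sigmaOf X T' :=
  biSup_mono h

lemma measurable_sigmaOf {k : ι} (hk : k ∈ T) : Measurable[sigmaOf X T] (X k) :=
  Measurable.of_comap_le (le_iSup₂ (f := fun k (_ : k ∈ T) => mβ.comap (X k)) k hk)

lemma indepFun_of_measurable_sigmaOf {γ : Type*} [MeasurableSpace γ]
    [MeasurableSpace Ω] {μ : Measure Ω} (hind : iIndepFun X μ) (hX : ∀ k, Measurable (X k))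
    {Y : Ω → γ} (hY : Measurable[sigmaOf X T] Y) {k : ι} (hk : k ∉ T) : IndepFun Y (X k) μ := by
  have h := indep_iSup_of_disjoint (fun k => (hX k).comap_le) hind.iIndep
    (Set.disjoint_singleton_right.mpr hk)
  rw [IndepFun_iff_Indep]
  simp only [Set.mem_singleton_iff, iSup_iSup_eq_left] at h
  exact indep_of_indep_of_le_left h hY.comap_le

end SigmaOf

section Compressor

variable {E : Type*} [NormedAddCommGroup E] {ΩQ ΩC : Type*} (Q : E → ΩQ → E) (C : E → ΩC → E)

def compressionError (a : E) (w : ΩQ) : E := a - Q a w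

/-- `ẽ_{t+1} + q_{t+1}` for the input `p = p_t`, where `w = (w₁, w₂, w₃)` seeds the calls
`Δ = Q p`, `ẽ_{t+1} = Q (p - Δ)` and `q_{t+1} = C (p - Δ - ẽ_{t+1})`. -/
def nextError (p : E) (w : ΩQ × ΩQ × ΩC) : E :=
  Q (compressionError Q p w.1) w.2.1
    + C (compressionError Q (compressionError Q p w.1) w.2.1) w.2.2

/-- The paper's `ζ = (ẽ_{t+1} + q_{t+1}) - (p - Δ)`; it reduces to `C b - b` with
`b = p - Δ - ẽ_{t+1}`, so only the unbiased compressor enters. -/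
def compressResidual (p : E) (w : ΩQ × ΩQ × ΩC) : E :=
  C (compressionError Q (compressionError Q p w.1) w.2.1) w.2.2
    - compressionError Q (compressionError Q p w.1) w.2.1

variable {Q C}

lemma nextError_eq_add_compressResidual (p : E) (w : ΩQ × ΩQ × ΩC) :
    nextError Q C p w = compressionError Q p w.1 + compressResidual Q C p w := by
  simp only [nextError, compressResidual, compressionError]
  abel

variable [MeasurableSpace ΩQ] [MeasurableSpace ΩC] {νQ : Measure ΩQ} {νC : Measure ΩC}
  {δ θ : ℝ≥0∞}

lemma lintegral_compressionError_sq_le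
    (hQvar : ∀ a, ∫⁻ w, (‖Q a w - a‖₊ : ℝ≥0∞) ^ 2 ∂νQ ≤ δ * (‖a‖₊ : ℝ≥0∞) ^ 2) (a : E) :
    ∫⁻ w, (‖compressionError Q a w‖₊ : ℝ≥0∞) ^ 2 ∂νQ ≤ δ * (‖a‖₊ : ℝ≥0∞) ^ 2 := by
  simpa only [compressionError, ← ofReal_norm_sq, norm_sub_rev a] using hQvar a

lemma lintegral_compressResidual_sq_le (hδ : δ ≠ ∞) (hθ : θ ≠ ∞)
    (hQvar : ∀ a, ∫⁻ w, (‖Q a w - a‖₊ : ℝ≥0∞) ^ 2 ∂νQ ≤ δ * (‖a‖₊ : ℝ≥0∞) ^ 2)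
    (hCvar : ∀ b, ∫⁻ w, (‖C b w - b‖₊ : ℝ≥0∞) ^ 2 ∂νC ≤ θ * (‖b‖₊ : ℝ≥0∞) ^ 2) (p : E) :
    ∫⁻ w, (‖compressResidual Q C p w‖₊ : ℝ≥0∞) ^ 2 ∂(νQ.prod (νQ.prod νC))
      ≤ θ * δ ^ 2 * (‖p‖₊ : ℝ≥0∞) ^ 2 := by
  calc _ ≤ ∫⁻ w₁, ∫⁻ w₂, ∫⁻ w₃, (‖compressResidual Q C p (w₁, w₂, w₃)‖₊ : ℝ≥0∞) ^ 2 ∂νC ∂νQ ∂νQ :=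
        (lintegral_prod_le _).trans (lintegral_mono fun _ => lintegral_prod_le _)
    _ ≤ ∫⁻ w₁, ∫⁻ w₂, θ * (‖compressionError Q (compressionError Q p w₁) w₂‖₊ : ℝ≥0∞) ^ 2
          ∂νQ ∂νQ :=
        lintegral_mono fun _ => lintegral_mono fun _ => hCvar _
    _ ≤ ∫⁻ w₁, θ * (δ * (‖compressionError Q p w₁‖₊ : ℝ≥0∞) ^ 2) ∂νQ := by
        gcongr with w₁
        rw [lintegral_const_mul' _ _ hθ]
        gcongr
        exact lintegral_compressionError_sq_le hQvar _
    _ ≤ θ * (δ * (δ * (‖p‖₊ : ℝ≥0∞) ^ 2)) := by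
        rw [lintegral_const_mul' _ _ hθ, lintegral_const_mul' _ _ hδ]
        gcongr
        exact lintegral_compressionError_sq_le hQvar p
    _ = θ * δ ^ 2 * (‖p‖₊ : ℝ≥0∞) ^ 2 := by ring

variable [MeasurableSpace E] [BorelSpace E] [SecondCountableTopology E]

lemma measurable_compressionError (hQ : Measurable (Function.uncurry Q)) :
    Measurable (Function.uncurry (compressionError Q)) :=
  measurable_fst.sub hQ

lemma measurable_nextError (hQ : Measurable (Function.uncurry Q))
    (hC : Measurable (Function.uncurry C)) : Measurable (Function.uncurry (nextError Q C)) := by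
  have ha : Measurable fun z : E × ΩQ × ΩQ × ΩC => compressionError Q z.1 z.2.1 :=
    (measurable_compressionError hQ).comp (measurable_fst.prodMk measurable_snd.fst)
  have hb : Measurable fun z : E × ΩQ × ΩQ × ΩC =>
      compressionError Q (compressionError Q z.1 z.2.1) z.2.2.1 :=
    (measurable_compressionError hQ).comp (ha.prodMk measurable_snd.snd.fst)
  exact (hQ.comp (ha.prodMk measurable_snd.snd.fst)).add
    (hC.comp (hb.prodMk measurable_snd.snd.snd))

lemma measurable_compressResidual (hQ : Measurable (Function.uncurry Q))
    (hC : Measurable (Function.uncurry C)) :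
    Measurable (Function.uncurry (compressResidual Q C)) := by
  have ha : Measurable fun z : E × ΩQ × ΩQ × ΩC => compressionError Q z.1 z.2.1 :=
    (measurable_compressionError hQ).comp (measurable_fst.prodMk measurable_snd.fst)
  have hb : Measurable fun z : E × ΩQ × ΩQ × ΩC =>
      compressionError Q (compressionError Q z.1 z.2.1) z.2.2.1 :=
    (measurable_compressionError hQ).comp (ha.prodMk measurable_snd.snd.fst)
  exact (hC.comp (hb.prodMk measurable_snd.snd.snd)).sub hb

variable [InnerProductSpace ℝ E] [CompleteSpace E] [IsProbabilityMeasure νQ]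
  [IsProbabilityMeasure νC]

lemma isCentered_sub_of_unbiased (hC : Measurable (Function.uncurry C)) (hθ : θ ≠ ∞)
    (hCmean : ∀ b, ∫ w, C b w ∂νC = b)
    (hCvar : ∀ b, ∫⁻ w, (‖C b w - b‖₊ : ℝ≥0∞) ^ 2 ∂νC ≤ θ * (‖b‖₊ : ℝ≥0∞) ^ 2) (b : E) :
    IsCentered νC fun w => C b w - b := by
  have hCb : Measurable (C b) := hC.comp measurable_prodMk_left
  have hL2 : MemLp (fun w => C b w - b) 2 νC :=
    memLp_two_of_lintegral_nnnorm_sq_ne_top (hCb.sub measurable_const).aestronglyMeasurable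
      (ne_top_of_le_ne_top (ENNReal.mul_ne_top hθ (by simp)) (hCvar b))
  have h := isCentered_sub_integral (hL2.add (memLp_const b))
  simp only [Pi.add_apply, sub_add_cancel, hCmean] at h
  exact h

lemma isCentered_compressResidual (hQ : Measurable (Function.uncurry Q))
    (hC : Measurable (Function.uncurry C)) (hθ : θ ≠ ∞) (hCmean : ∀ b, ∫ w, C b w ∂νC = b)
    (hCvar : ∀ b, ∫⁻ w, (‖C b w - b‖₊ : ℝ≥0∞) ^ 2 ∂νC ≤ θ * (‖b‖₊ : ℝ≥0∞) ^ 2) (p : E) :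
    IsCentered (νQ.prod (νQ.prod νC)) (compressResidual Q C p) := by
  have hm := measurable_compressResidual hQ hC
  refine IsCentered.prod (hm.comp measurable_prodMk_left) fun w₁ => ?_
  refine IsCentered.prod (hm.comp (measurable_const.prodMk measurable_prodMk_left)) fun w₂ => ?_
  exact isCentered_sub_of_unbiased hC hθ hCmean hCvar
    (compressionError Q (compressionError Q p w₁) w₂)

lemma lintegral_nextError_sq_le (hC : Measurable (Function.uncurry C)) (hδ : δ ≠ ∞) (hθ : θ ≠ ∞)
    (hQvar : ∀ a, ∫⁻ w, (‖Q a w - a‖₊ : ℝ≥0∞) ^ 2 ∂νQ ≤ δ * (‖a‖₊ : ℝ≥0∞) ^ 2)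
    (hCmean : ∀ b, ∫ w, C b w ∂νC = b)
    (hCvar : ∀ b, ∫⁻ w, (‖C b w - b‖₊ : ℝ≥0∞) ^ 2 ∂νC ≤ θ * (‖b‖₊ : ℝ≥0∞) ^ 2) (p : E) :
    ∫⁻ w, (‖nextError Q C p w‖₊ : ℝ≥0∞) ^ 2 ∂(νQ.prod (νQ.prod νC))
      ≤ (1 + θ * δ) * δ * (‖p‖₊ : ℝ≥0∞) ^ 2 := by
  calc _ ≤ ∫⁻ w₁, ∫⁻ w₂, ∫⁻ w₃, (‖nextError Q C p (w₁, w₂, w₃)‖₊ : ℝ≥0∞) ^ 2 ∂νC ∂νQ ∂νQ :=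
        (lintegral_prod_le _).trans (lintegral_mono fun _ => lintegral_prod_le _)
    _ ≤ ∫⁻ w₁, ∫⁻ w₂, ((‖compressionError Q p w₁‖₊ : ℝ≥0∞) ^ 2
          + θ * (‖compressionError Q (compressionError Q p w₁) w₂‖₊ : ℝ≥0∞) ^ 2) ∂νQ ∂νQ := by
        gcongr with w₁ w₂
        simp_rw [nextError_eq_add_compressResidual]
        refine (isCentered_sub_of_unbiased hC hθ hCmean hCvar
          (compressionError Q (compressionError Q p w₁) w₂) _).trans_le ?_
        gcongr
        exact hCvar _
    _ ≤ ∫⁻ w₁, (1 + θ * δ) * (‖compressionError Q p w₁‖₊ : ℝ≥0∞) ^ 2 ∂νQ := by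
        gcongr with w₁
        rw [lintegral_add_left measurable_const, lintegral_const, measure_univ, mul_one,
          lintegral_const_mul' _ _ hθ]
        calc _ ≤ (‖compressionError Q p w₁‖₊ : ℝ≥0∞) ^ 2
                + θ * (δ * (‖compressionError Q p w₁‖₊ : ℝ≥0∞) ^ 2) := by
              gcongr
              exact lintegral_compressionError_sq_le hQvar _
          _ = _ := by ring
    _ ≤ (1 + θ * δ) * (δ * (‖p‖₊ : ℝ≥0∞) ^ 2) := by
        rw [lintegral_const_mul' _ _ (by finiteness)]
        gcongr
        exact lintegral_compressionError_sq_le hQvar p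
    _ = (1 + θ * δ) * δ * (‖p‖₊ : ℝ≥0∞) ^ 2 := by ring

end Compressor

section Step

variable {E : Type*} [NormedAddCommGroup E] [MeasurableSpace E] [BorelSpace E]
  {Ω : Type*} [MeasurableSpace Ω] {μ : Measure Ω}

lemma lintegral_nnnorm_add_sq_le_weighted {κ : ℝ} (hκ : 0 < κ) {A B : Ω → E} (hA : Measurable A) :
    ∫⁻ ω, (‖A ω + B ω‖₊ : ℝ≥0∞) ^ 2 ∂μ
      ≤ ENNReal.ofReal (1 + κ) * ∫⁻ ω, (‖A ω‖₊ : ℝ≥0∞) ^ 2 ∂μ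
        + ENNReal.ofReal (1 + 1 / κ) * ∫⁻ ω, (‖B ω‖₊ : ℝ≥0∞) ^ 2 ∂μ := by
  rw [← lintegral_const_mul' _ _ ENNReal.ofReal_ne_top,
    ← lintegral_const_mul' _ _ ENNReal.ofReal_ne_top,
    ← lintegral_add_left ((hA.nnnorm.coe_nnreal_ennreal.pow_const 2).const_mul _)]
  refine lintegral_mono fun ω => ?_
  rw [← ofReal_norm_sq, ← ofReal_norm_sq, ← ofReal_norm_sq, ← ENNReal.ofReal_mul (by positivity),
    ← ENNReal.ofReal_mul (by positivity), ← ENNReal.ofReal_add (by positivity) (by positivity)]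
  exact ENNReal.ofReal_le_ofReal (norm_add_sq_le_weighted hκ _ _)

variable [InnerProductSpace ℝ E] [SecondCountableTopology E]
  {Ωg W : Type*} [MeasurableSpace Ωg] [MeasurableSpace W] {g : E → Ωg → E}

lemma measurable_comp_update (hg : Measurable (Function.uncurry g)) {F : E → W → E}
    (hF : Measurable (Function.uncurry F)) (η : ℝ) :
    Measurable (Function.uncurry fun (xr : E × E) (s : Ωg × W) => F (xr.2 + η • g xr.1 s.1) s.2) :=
  hF.comp ((measurable_fst.snd.add
    ((hg.comp (measurable_fst.fst.prodMk measurable_snd.fst)).const_smul η)).prodMk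
    measurable_snd.snd)

variable [CompleteSpace E] {νg : Measure Ωg} [IsProbabilityMeasure νg] {m : E → E} {σ : ℝ}

lemma lintegral_add_smul_sq_le (hg : Measurable (Function.uncurry g))
    (hmean : ∀ x, ∫ u, g x u ∂νg = m x)
    (hvar : ∀ x, ∫⁻ u, (‖g x u - m x‖₊ : ℝ≥0∞) ^ 2 ∂νg ≤ ENNReal.ofReal (σ ^ 2))
    (η : ℝ) (x r : E) :
    ∫⁻ u, (‖r + η • g x u‖₊ : ℝ≥0∞) ^ 2 ∂νg
      ≤ (‖r + η • m x‖₊ : ℝ≥0∞) ^ 2 + ENNReal.ofReal (η ^ 2 * σ ^ 2) := by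
  have hgx : Measurable (g x) := hg.comp measurable_prodMk_left
  have hL2 : MemLp (fun u => η • g x u) 2 νg := by
    have h := memLp_two_of_lintegral_nnnorm_sq_ne_top
      (hgx.sub measurable_const).aestronglyMeasurable
      (ne_top_of_le_ne_top ENNReal.ofReal_ne_top (hvar x))
    convert (h.add (memLp_const (m x))).const_smul η using 1
    ext u
    simp
  have hc := isCentered_sub_integral hL2 (r + η • m x)
  simp only [integral_smul, hmean, ← smul_sub] at hc
  have hsplit : ∀ u, r + η • g x u = r + η • m x + η • (g x u - m x) := fun u => by
    rw [smul_sub]; abel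
  simp_rw [hsplit, hc, nnnorm_smul_sq]
  rw [lintegral_const_mul' _ _ ENNReal.ofReal_ne_top, ENNReal.ofReal_mul (sq_nonneg η)]
  gcongr
  exact hvar x

variable {νW : Measure W} [SFinite νW] [IsProbabilityMeasure μ]

theorem lintegral_step_sq_le (hg : Measurable (Function.uncurry g))
    (hmean : ∀ x, ∫ u, g x u ∂νg = m x)
    (hvar : ∀ x, ∫⁻ u, (‖g x u - m x‖₊ : ℝ≥0∞) ^ 2 ∂νg ≤ ENNReal.ofReal (σ ^ 2))
    {F : E → W → E} (hF : Measurable (Function.uncurry F)) {k : ℝ≥0∞} (hk : k ≠ ∞)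
    (hFk : ∀ p, ∫⁻ w, (‖F p w‖₊ : ℝ≥0∞) ^ 2 ∂νW ≤ k * (‖p‖₊ : ℝ≥0∞) ^ 2)
    {X R : Ω → E} {Y : Ω → Ωg × W} (hX : Measurable X) (hR : Measurable R) (hY : Measurable Y)
    (hind : IndepFun (fun ω => (X ω, R ω)) Y μ) (hlaw : μ.map Y = νg.prod νW)
    {κ ρ γ : ℝ} (hκ : 0 < κ) (hρ : 0 ≤ ρ) (hγ : 0 ≤ γ)
    (hR2 : ∫⁻ ω, (‖R ω‖₊ : ℝ≥0∞) ^ 2 ∂μ ≤ ENNReal.ofReal ρ)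
    (hm2 : ∫⁻ ω, (‖m (X ω)‖₊ : ℝ≥0∞) ^ 2 ∂μ ≤ ENNReal.ofReal γ) (η : ℝ) :
    ∫⁻ ω, (‖F (R ω + η • g (X ω) (Y ω).1) (Y ω).2‖₊ : ℝ≥0∞) ^ 2 ∂μ
      ≤ k * ENNReal.ofReal ((1 + κ) * ρ + (1 + 1 / κ) * η ^ 2 * γ + η ^ 2 * σ ^ 2) := by
  calc _ = ∫⁻ ω, ∫⁻ s, (‖F (R ω + η • g (X ω) s.1) s.2‖₊ : ℝ≥0∞) ^ 2 ∂(νg.prod νW) ∂μ :=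
        lintegral_comp_of_indepFun (F := fun xr s => (‖F (xr.2 + η • g xr.1 s.1) s.2‖₊ : ℝ≥0∞) ^ 2)
          (hX.prodMk hR) hY hind hlaw
          ((measurable_comp_update hg hF η).nnnorm.coe_nnreal_ennreal.pow_const 2)
    _ ≤ ∫⁻ ω, k * ∫⁻ u, (‖R ω + η • g (X ω) u‖₊ : ℝ≥0∞) ^ 2 ∂νg ∂μ := by
        gcongr with ω
        rw [← lintegral_const_mul' _ _ hk]
        exact (lintegral_prod_le _).trans (lintegral_mono fun u => hFk _)
    _ ≤ ∫⁻ ω, k * ((‖R ω + η • m (X ω)‖₊ : ℝ≥0∞) ^ 2 + ENNReal.ofReal (η ^ 2 * σ ^ 2)) ∂μ := by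
        gcongr with ω
        exact lintegral_add_smul_sq_le hg hmean hvar η _ _
    _ = k * (∫⁻ ω, (‖R ω + η • m (X ω)‖₊ : ℝ≥0∞) ^ 2 ∂μ + ENNReal.ofReal (η ^ 2 * σ ^ 2)) := by
        rw [lintegral_const_mul' _ _ hk, lintegral_add_right _ measurable_const, lintegral_const,
          measure_univ, mul_one]
    _ ≤ k * (ENNReal.ofReal (1 + κ) * ENNReal.ofReal ρ
          + ENNReal.ofReal (1 + 1 / κ) * (ENNReal.ofReal (η ^ 2) * ENNReal.ofReal γ)
          + ENNReal.ofReal (η ^ 2 * σ ^ 2)) := by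
        gcongr
        refine (lintegral_nnnorm_add_sq_le_weighted hκ hR).trans ?_
        simp_rw [nnnorm_smul_sq]
        rw [lintegral_const_mul' _ _ ENNReal.ofReal_ne_top]
        gcongr
    _ = _ := by
        rw [← ENNReal.ofReal_mul (by positivity), ← ENNReal.ofReal_mul (by positivity),
          ← ENNReal.ofReal_mul (by positivity),
          ← ENNReal.ofReal_add (by positivity) (by positivity),
          ← ENNReal.ofReal_add (by positivity) (by positivity), mul_assoc _ (η ^ 2)]

end Step

section Trajectory

variable {E : Type*} [NormedAddCommGroup E] [InnerProductSpace ℝ E]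
  [MeasurableSpace E] [BorelSpace E] [SecondCountableTopology E]
  {Ωg ΩQ ΩC : Type*} [MeasurableSpace Ωg] [MeasurableSpace ΩQ] [MeasurableSpace ΩC]
  {N : ℕ} {G' : ℕ → Fin N → E → Ωg → E} {Q : E → ΩQ → E} {C : E → ΩC → E} {η : ℝ}
  {Ω : Type*} {seed : ℕ → Fin N → Ω → Ωg × ΩQ × ΩQ × ΩC}
  {x : ℕ → Ω → E} {r p : ℕ → Fin N → Ω → E}
  -- `r = ẽ + q`: the two error buffers enter the iteration only through their sum
  (hG : ∀ t i, Measurable (Function.uncurry (G' t i)))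
  (hp : ∀ t i ω, p t i ω = r t i ω + η • G' t i (x t ω) (seed t i ω).1)

variable (seed) in
abbrev seedsBefore (t : ℕ) : MeasurableSpace Ω := sigmaOf (Function.uncurry seed) {k | k.1 < t}

include hG hp in
lemma measurable_input {t : ℕ} {i : Fin N} {T : Set (ℕ × Fin N)}
    (hT : {k : ℕ × Fin N | k.1 < t} ⊆ T) (hi : (t, i) ∈ T)
    (hxt : Measurable[seedsBefore seed t] (x t))
    (hrt : Measurable[seedsBefore seed t] (r t i)) :
    Measurable[sigmaOf (Function.uncurry seed) T] (p t i) := by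
  have hle := sigmaOf_mono (X := Function.uncurry seed) hT
  have hseed : Measurable[sigmaOf (Function.uncurry seed) T] (seed t i) :=
    measurable_sigmaOf (X := Function.uncurry seed) hi
  rw [funext (hp t i)]
  exact (hrt.mono hle le_rfl).add
    (((hG t i).comp ((hxt.mono hle le_rfl).prodMk hseed.fst)).const_smul η)

variable (hQ : Measurable (Function.uncurry Q)) (hC : Measurable (Function.uncurry C)) {x₀ : E}
  (hx0 : ∀ ω, x 0 ω = x₀) (hr0 : ∀ i ω, r 0 i ω = 0)
  (hx : ∀ t ω, x (t + 1) ω = x t ω - (N : ℝ)⁻¹ • ∑ i, Q (p t i ω) (seed t i ω).2.1)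
  (hr : ∀ t i ω, r (t + 1) i ω = nextError Q C (p t i ω) (seed t i ω).2)

include hG hp hQ hC hx0 hr0 hx hr in
lemma measurable_state (t : ℕ) :
    Measurable[seedsBefore seed t] (x t) ∧
      ∀ i, Measurable[seedsBefore seed t] (r t i) := by
  induction t with
  | zero =>
    refine ⟨?_, fun i => ?_⟩
    · rw [funext hx0]; exact measurable_const
    · rw [funext (hr0 i)]; exact measurable_const
  | succ t ih =>
    have hT : {k : ℕ × Fin N | k.1 < t} ⊆ {k | k.1 < t + 1} := fun k hk => Nat.lt_succ_of_lt hk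
    have hseed : ∀ i, Measurable[seedsBefore seed (t + 1)] (seed t i) :=
      fun i => measurable_sigmaOf (X := Function.uncurry seed) (k := (t, i)) (Nat.lt_succ_self t)
    have hpt : ∀ i, Measurable[seedsBefore seed (t + 1)] (p t i) :=
      fun i => measurable_input hG hp hT (Nat.lt_succ_self t) ih.1 (ih.2 i)
    refine ⟨?_, fun i => ?_⟩
    · rw [funext (hx t)]
      exact (ih.1.mono (sigmaOf_mono hT) le_rfl).sub ((Finset.measurable_sum _ fun i _ =>
        hQ.comp ((hpt i).prodMk (hseed i).snd.fst)).const_smul _)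
    · rw [funext (hr t i)]
      exact (measurable_nextError hQ hC).comp ((hpt i).prodMk (hseed i).snd)

variable [CompleteSpace E] [MeasurableSpace Ω] {μ : Measure Ω} [IsProbabilityMeasure μ]
  {νg : Measure Ωg} {νQ : Measure ΩQ} {νC : Measure ΩC}
  [IsProbabilityMeasure νg] [IsProbabilityMeasure νQ] [IsProbabilityMeasure νC]
  (hseed : ∀ t i, Measurable (seed t i)) (hind : iIndepFun (Function.uncurry seed) μ)
  (hlaw : ∀ t i, μ.map (seed t i) = νg.prod (νQ.prod (νQ.prod νC)))
  {m : E → E} {σ γ : ℝ} (hmean : ∀ t i a, ∫ u, G' t i a u ∂νg = m a)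
  (hvar : ∀ t i a, ∫⁻ u, (‖G' t i a u - m a‖₊ : ℝ≥0∞) ^ 2 ∂νg ≤ ENNReal.ofReal (σ ^ 2))
  (hγ : 0 ≤ γ) (hm2 : ∀ t, ∫⁻ ω, (‖m (x t ω)‖₊ : ℝ≥0∞) ^ 2 ∂μ ≤ ENNReal.ofReal γ)

include hG hp hQ hC hx0 hr0 hx hr hseed hind hlaw hmean hvar hγ hm2 in
lemma lintegral_update_sq_le {F : E → ΩQ × ΩQ × ΩC → E} (hF : Measurable (Function.uncurry F))
    {k : ℝ≥0∞} (hk : k ≠ ∞)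
    (hFk : ∀ p, ∫⁻ w, (‖F p w‖₊ : ℝ≥0∞) ^ 2 ∂(νQ.prod (νQ.prod νC)) ≤ k * (‖p‖₊ : ℝ≥0∞) ^ 2)
    {κ ρ : ℝ} (hκ : 0 < κ) (hρ : 0 ≤ ρ) {t : ℕ} {i : Fin N}
    (hr2 : ∫⁻ ω, (‖r t i ω‖₊ : ℝ≥0∞) ^ 2 ∂μ ≤ ENNReal.ofReal ρ) :
    ∫⁻ ω, (‖F (p t i ω) (seed t i ω).2‖₊ : ℝ≥0∞) ^ 2 ∂μ
      ≤ k * ENNReal.ofReal ((1 + κ) * ρ + (1 + 1 / κ) * η ^ 2 * γ + η ^ 2 * σ ^ 2) := by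
  obtain ⟨hxt, hrt⟩ := measurable_state hG hp hQ hC hx0 hr0 hx hr t
  have hle := sigmaOf_le (T := {k | k.1 < t}) fun k : ℕ × Fin N => hseed k.1 k.2
  simp_rw [hp]
  exact lintegral_step_sq_le (hG t i) (hmean t i) (hvar t i) hF hk hFk (hxt.mono hle le_rfl)
    ((hrt i).mono hle le_rfl) (hseed t i)
    (indepFun_of_measurable_sigmaOf hind (fun k => hseed k.1 k.2) (hxt.prodMk (hrt i))
      (k := (t, i)) (lt_irrefl t))
    (hlaw t i) hκ hρ hγ hr2 (hm2 t) η

variable {δ θ : ℝ≥0∞} (hδ : δ ≠ ∞) (hθ : θ ≠ ∞)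
  (hQvar : ∀ a, ∫⁻ w, (‖Q a w - a‖₊ : ℝ≥0∞) ^ 2 ∂νQ ≤ δ * (‖a‖₊ : ℝ≥0∞) ^ 2)
  (hCmean : ∀ b, ∫ w, C b w ∂νC = b)
  (hCvar : ∀ b, ∫⁻ w, (‖C b w - b‖₊ : ℝ≥0∞) ^ 2 ∂νC ≤ θ * (‖b‖₊ : ℝ≥0∞) ^ 2)

include hG hp hQ hC hx0 hr0 hx hr hseed hind hlaw hmean hvar hγ hm2 hδ hθ hQvar hCmean hCvar in
theorem lintegral_error_sq_le {lam K : ℝ} (hlam : 0 < lam) (hK0 : 0 ≤ K)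
    (hK : (1 + θ * δ) * δ
        * ENNReal.ofReal ((1 + lam) * K + (1 + 1 / lam) * η ^ 2 * γ + η ^ 2 * σ ^ 2)
      ≤ ENNReal.ofReal K) (t : ℕ) (i : Fin N) :
    ∫⁻ ω, (‖r t i ω‖₊ : ℝ≥0∞) ^ 2 ∂μ ≤ ENNReal.ofReal K := by
  induction t generalizing i with
  | zero => simp [hr0]
  | succ t ih =>
    simp_rw [hr t i]
    exact (lintegral_update_sq_le hG hp hQ hC hx0 hr0 hx hr hseed hind hlaw hmean hvar hγ hm2
      (measurable_nextError hQ hC) (by finiteness)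
      (lintegral_nextError_sq_le hC hδ hθ hQvar hCmean hCvar) hlam hK0 (ih i)).trans hK

include hG hp hQ hC hx0 hr0 hx hr hseed hind hlaw hθ hCmean hCvar in
/-- Each residual has conditional mean zero given the past and the other workers' seeds. -/
theorem lintegral_sum_compressResidual_sq (t : ℕ) (J : Finset (Fin N)) :
    ∫⁻ ω, (‖∑ j ∈ J, compressResidual Q C (p t j ω) (seed t j ω).2‖₊ : ℝ≥0∞) ^ 2 ∂μ
      = ∑ j ∈ J, ∫⁻ ω, (‖compressResidual Q C (p t j ω) (seed t j ω).2‖₊ : ℝ≥0∞) ^ 2 ∂μ := by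
  classical
  obtain ⟨hxt, hrt⟩ := measurable_state hG hp hQ hC hx0 hr0 hx hr t
  induction J using Finset.induction_on with
  | empty => simp
  | insert i J hiJ ih =>
    set T : Set (ℕ × Fin N) := {k | k.1 < t ∨ k.1 = t ∧ k.2 ∈ J}
    have hT : {k : ℕ × Fin N | k.1 < t} ⊆ T := fun k hk => Or.inl hk
    have hle := sigmaOf_le (T := T) fun k : ℕ × Fin N => hseed k.1 k.2
    have hZ : Measurable[sigmaOf (Function.uncurry seed) T]
        fun ω => ∑ j ∈ J, compressResidual Q C (p t j ω) (seed t j ω).2 :=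
      Finset.measurable_sum _ fun j hj => (measurable_compressResidual hQ hC).comp
        ((measurable_input hG hp hT (Or.inr ⟨rfl, hj⟩) hxt (hrt j)).prodMk
          (measurable_sigmaOf (X := Function.uncurry seed) (k := (t, j)) (Or.inr ⟨rfl, hj⟩)).snd)
    have hX : Measurable[sigmaOf (Function.uncurry seed) T] fun ω => (x t ω, r t i ω) :=
      (hxt.prodMk (hrt i)).mono (sigmaOf_mono hT) le_rfl
    have hΦ := measurable_comp_update (hG t i) (measurable_compressResidual hQ hC) η
    rw [Finset.sum_insert hiJ, ← ih, add_comm]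
    simp_rw [Finset.sum_insert hiJ, add_comm (compressResidual Q C (p t i _) _), hp t i]
    have hti : (t, i) ∉ T := by simp [T, hiJ]
    have hindep := indepFun_of_measurable_sigmaOf hind (fun k => hseed k.1 k.2) (hZ.prodMk hX) hti
    have hcent : ∀ xr : E × E, IsCentered (νg.prod (νQ.prod (νQ.prod νC)))
        fun s => compressResidual Q C (xr.2 + η • G' t i xr.1 s.1) s.2 :=
      fun xr => IsCentered.prod (hΦ.comp measurable_prodMk_left)
        fun u => isCentered_compressResidual hQ hC hθ hCmean hCvar (xr.2 + η • G' t i xr.1 u)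
    exact IsCentered.lintegral_add_comp_of_indepFun (hZ.mono hle le_rfl) (hX.mono hle le_rfl)
      (hseed t i) hindep (hlaw t i) hΦ hcent

include hG hp hQ hC hx0 hr0 hx hr hseed hind hlaw hmean hvar hγ hm2 hδ hθ hQvar hCmean hCvar in
theorem lintegral_mean_compressResidual_sq_le {lam K : ℝ} (hlam : 0 < lam) (hK0 : 0 ≤ K)
    (hK : (1 + θ * δ) * δ
        * ENNReal.ofReal ((1 + lam) * K + (1 + 1 / lam) * η ^ 2 * γ + η ^ 2 * σ ^ 2)
      ≤ ENNReal.ofReal K) (t : ℕ) :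
    ∫⁻ ω, (‖(N : ℝ)⁻¹ • ∑ i, compressResidual Q C (p t i ω) (seed t i ω).2‖₊ : ℝ≥0∞) ^ 2 ∂μ
      ≤ θ * δ ^ 2 * ENNReal.ofReal ((2 * K + 2 * η ^ 2 * γ + η ^ 2 * σ ^ 2) / N) := by
  have hζ : ∀ i, ∫⁻ ω, (‖compressResidual Q C (p t i ω) (seed t i ω).2‖₊ : ℝ≥0∞) ^ 2 ∂μ
      ≤ θ * δ ^ 2 * ENNReal.ofReal ((1 + 1) * K + (1 + 1 / 1) * η ^ 2 * γ + η ^ 2 * σ ^ 2) :=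
    fun i => lintegral_update_sq_le hG hp hQ hC hx0 hr0 hx hr hseed hind hlaw hmean hvar hγ hm2
      (measurable_compressResidual hQ hC) (by finiteness)
      (lintegral_compressResidual_sq_le hδ hθ hQvar hCvar) one_pos hK0
      (lintegral_error_sq_le hG hp hQ hC hx0 hr0 hx hr hseed hind hlaw hmean hvar hγ hm2 hδ hθ
        hQvar hCmean hCvar hlam hK0 hK t i)
  simp_rw [nnnorm_smul_sq]
  rw [lintegral_const_mul' _ _ ENNReal.ofReal_ne_top,
    lintegral_sum_compressResidual_sq hG hp hQ hC hx0 hr0 hx hr hseed hind hlaw hθ hCmean hCvar]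
  calc _ ≤ ENNReal.ofReal ((N : ℝ)⁻¹ ^ 2) * ∑ _i : Fin N,
          θ * δ ^ 2 * ENNReal.ofReal ((1 + 1) * K + (1 + 1 / 1) * η ^ 2 * γ + η ^ 2 * σ ^ 2) := by
        gcongr with i
        exact hζ i
    _ = _ := by
        rw [Finset.sum_const, Finset.card_univ, Fintype.card_fin, nsmul_eq_mul, ← mul_assoc,
          mul_comm, ← ENNReal.ofReal_natCast, ← ENNReal.ofReal_mul (by positivity), mul_assoc,
          ← ENNReal.ofReal_mul (by positivity)]
        congr 2
        field_simp
        ring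

end Trajectory

lemma error_bound_invariant {θ δ c lam η σ G K : ℝ} (hθ : 0 ≤ θ) (hδ0 : 0 < δ) (hδ1 : δ < 1)
    (hc0 : 0 < c) (hc1 : c < 1) (hlam : 0 < lam)
    (hδeq : δ = c / ((1 + lam) * (1 + Real.sqrt θ) ^ 2))
    (hK : K = c / lam * η ^ 2 * (σ ^ 2 + G ^ 2) / (1 - c)) :
    (1 + ENNReal.ofReal θ * ENNReal.ofReal δ) * ENNReal.ofReal δ
      * ENNReal.ofReal ((1 + lam) * K + (1 + 1 / lam) * η ^ 2 * G ^ 2 + η ^ 2 * σ ^ 2)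
        ≤ ENNReal.ofReal K := by
  rw [← ENNReal.ofReal_mul hθ, ← ENNReal.ofReal_one, ← ENNReal.ofReal_add zero_le_one
    (by positivity), ← ENNReal.ofReal_mul (by positivity), ← ENNReal.ofReal_mul (by positivity)]
  refine ENNReal.ofReal_le_ofReal ?_
  have hK0 : 0 ≤ K := hK ▸ div_nonneg (by positivity) (by linarith)
  have hsqrt := Real.sq_sqrt hθ
  have hcontract : (1 + θ * δ) * δ ≤ c / (1 + lam) := by
    have hδc : (1 + Real.sqrt θ) ^ 2 * δ = c / (1 + lam) := by
      rw [hδeq]; field_simp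
    rw [← hδc]
    gcongr
    nlinarith [Real.sqrt_nonneg θ]
  have h1c : 1 - c ≠ 0 := by linarith
  have hσ : η ^ 2 * σ ^ 2 ≤ (1 + 1 / lam) * η ^ 2 * σ ^ 2 := by
    have : 0 ≤ 1 / lam * (η ^ 2 * σ ^ 2) := by positivity
    linarith
  calc _ ≤ c / (1 + lam) * ((1 + lam) * K + (1 + 1 / lam) * η ^ 2 * G ^ 2 + η ^ 2 * σ ^ 2) := by
        gcongr
    _ ≤ c / (1 + lam) * ((1 + lam) * K + (1 + 1 / lam) * η ^ 2 * (σ ^ 2 + G ^ 2)) :=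
        mul_le_mul_of_nonneg_left (by linarith) (by positivity)
    _ = K := by
        rw [hK]
        field_simp
        ring

lemma residual_constant_le {θ δ c lam η σ G K : ℝ} {N : ℕ} (hθ : 0 ≤ θ) (hδ : 0 ≤ δ) (hc1 : c < 1)
    (hlam : 0 < lam) (hK : K = c / lam * η ^ 2 * (σ ^ 2 + G ^ 2) / (1 - c)) :
    ENNReal.ofReal θ * ENNReal.ofReal δ ^ 2
        * ENNReal.ofReal ((2 * K + 2 * η ^ 2 * G ^ 2 + η ^ 2 * σ ^ 2) / N)
      ≤ ENNReal.ofReal ((1 - c + c / lam) / (1 - c)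
          * (2 * δ ^ 2 * θ * η ^ 2 * (σ ^ 2 + G ^ 2) / N)) := by
  rw [← ENNReal.ofReal_pow hδ, ← ENNReal.ofReal_mul hθ, ← ENNReal.ofReal_mul (by positivity)]
  refine ENNReal.ofReal_le_ofReal ?_
  have h1c : 1 - c ≠ 0 := by linarith
  calc _ ≤ θ * δ ^ 2 * ((2 * K + 2 * η ^ 2 * (σ ^ 2 + G ^ 2)) / N) := by
        gcongr θ * δ ^ 2 * (?_ / _)
        linarith [sq_nonneg (η * σ)]
    _ = _ := by
        rw [hK]
        field_simp
        ring

end IConEF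

open IConEF in
theorem iconef_v2_residual_bound_general
    (d N : ℕ)
    (σ G δ θ c lam η : ℝ)
    (hθ : 0 ≤ θ)
    (hδ0 : 0 < δ) (hδ1 : δ < 1) (hc : c ∈ Set.Ioo (0 : ℝ) 1) (hlam : 0 < lam)
    (hδeq : δ = c / ((1 + lam) * (1 + Real.sqrt θ) ^ 2))
    (f : EuclideanSpace ℝ (Fin d) → ℝ)
    -- seed spaces for the stochastic gradients and the compressor calls
    {Ωg ΩQ ΩC : Type} [MeasurableSpace Ωg] [MeasurableSpace ΩQ] [MeasurableSpace ΩC]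
    (νg : Measure Ωg) (νQ : Measure ΩQ) (νC : Measure ΩC)
    [IsProbabilityMeasure νg] [IsProbabilityMeasure νQ] [IsProbabilityMeasure νC]
    (G' : ℕ → Fin N → EuclideanSpace ℝ (Fin d) → Ωg → EuclideanSpace ℝ (Fin d))
    (Q : EuclideanSpace ℝ (Fin d) → ΩQ → EuclideanSpace ℝ (Fin d))
    (C : EuclideanSpace ℝ (Fin d) → ΩC → EuclideanSpace ℝ (Fin d))
    (hGmeas : ∀ t i, Measurable (Function.uncurry (G' t i)))
    (hQmeas : Measurable (Function.uncurry Q))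
    (hCmeas : Measurable (Function.uncurry C))
    -- Assumption 2: unbiased stochastic gradients with bounded variance
    (hGmean : ∀ t i a, ∫ ω, G' t i a ω ∂νg = gradient f a)
    (hGvar : ∀ t i a,
      ∫⁻ ω, (‖G' t i a ω - gradient f a‖₊ : ℝ≥0∞) ^ 2 ∂νg ≤ ENNReal.ofReal (σ ^ 2))
    -- Assumption 4: contractive gradient compressor
    (hQvar : ∀ a, ∫⁻ ω, (‖Q a ω - a‖₊ : ℝ≥0∞) ^ 2 ∂νQ ≤ ENNReal.ofReal (δ * ‖a‖ ^ 2))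
    -- Assumption 3: unbiased error compressor
    (hCmean : ∀ a, ∫ ω, C a ω ∂νC = a)
    (hCvar : ∀ a, ∫⁻ ω, (‖C a ω - a‖₊ : ℝ≥0∞) ^ 2 ∂νC ≤ ENNReal.ofReal (θ * ‖a‖ ^ 2))
    -- the underlying sample space carrying i.i.d. fresh seeds for every (t, i):
    -- one gradient seed and two Q seeds plus one C seed per step
    {Ω : Type} [MeasurableSpace Ω] (μ : Measure Ω) [IsProbabilityMeasure μ]
    (seed : ℕ → Fin N → Ω → Ωg × ΩQ × ΩQ × ΩC)
    (hseedMeas : ∀ t i, Measurable (seed t i))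
    (hseedLaw : ∀ t i, Measure.map (seed t i) μ = νg.prod (νQ.prod (νQ.prod νC)))
    (hseedIndep : iIndepFun
      (fun q : ℕ × Fin N => seed q.1 q.2) μ)
    -- the iConEF-v2 trajectories
    (x0 : EuclideanSpace ℝ (Fin d))
    (x : ℕ → Ω → EuclideanSpace ℝ (Fin d))
    (et q g p Δ : ℕ → Fin N → Ω → EuclideanSpace ℝ (Fin d))
    (hx0 : ∀ ω, x 0 ω = x0)
    (het0 : ∀ i ω, et 0 i ω = 0)
    (hq0 : ∀ i ω, q 0 i ω = 0)
    (hg : ∀ t i ω, g t i ω = G' t i (x t ω) (seed t i ω).1)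
    (hp : ∀ t i ω, p t i ω = η • g t i ω + et t i ω + q t i ω)
    (hΔ : ∀ t i ω, Δ t i ω = Q (p t i ω) (seed t i ω).2.1)
    (hx : ∀ t ω, x (t + 1) ω = x t ω - (N : ℝ)⁻¹ • ∑ i, Δ t i ω)
    (het : ∀ t i ω, et (t + 1) i ω = Q (p t i ω - Δ t i ω) (seed t i ω).2.2.1)
    (hq : ∀ t i ω,
      q (t + 1) i ω = C (p t i ω - Δ t i ω - et (t + 1) i ω) (seed t i ω).2.2.2)
    -- Assumption 2: bounded expected squared gradient norm
    (hgradbound : ∀ t,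
      ∫⁻ ω, (‖gradient f (x t ω)‖₊ : ℝ≥0∞) ^ 2 ∂μ ≤ ENNReal.ofReal (G ^ 2))
    -- the combined error-compression residual
    (ζ : ℕ → Fin N → Ω → EuclideanSpace ℝ (Fin d))
    (hζ : ∀ t i ω,
      ζ t i ω = et (t + 1) i ω + q (t + 1) i ω - p t i ω + Δ t i ω) :
    ∀ t : ℕ,
      ∫⁻ ω, (‖(N : ℝ)⁻¹ • ∑ i, ζ t i ω‖₊ : ℝ≥0∞) ^ 2 ∂μ
        ≤ ENNReal.ofReal (((1 - c + c / lam) / (1 - c)) *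
            (2 * δ ^ 2 * θ * η ^ 2 * (σ ^ 2 + G ^ 2) / (N : ℝ))) := by
  obtain ⟨hc0, hc1⟩ := hc
  set K := c / lam * η ^ 2 * (σ ^ 2 + G ^ 2) / (1 - c) with hK
  have hp' : ∀ t i ω, p t i ω = (et t i ω + q t i ω) + η • G' t i (x t ω) (seed t i ω).1 := by
    intro t i ω; rw [hp, hg]; abel
  have hx' : ∀ t ω, x (t + 1) ω = x t ω - (N : ℝ)⁻¹ • ∑ i, Q (p t i ω) (seed t i ω).2.1 := by
    intro t ω; simp only [hx, hΔ]
  have hr' : ∀ t i ω, et (t + 1) i ω + q (t + 1) i ω = nextError Q C (p t i ω) (seed t i ω).2 := by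
    intro t i ω; rw [hq, het, hΔ]; rfl
  have hζ' : ∀ t i ω, ζ t i ω = compressResidual Q C (p t i ω) (seed t i ω).2 := by
    intro t i ω
    rw [hζ, hr', nextError_eq_add_compressResidual, hΔ, compressionError]
    abel
  intro t
  simp_rw [hζ']
  exact (lintegral_mean_compressResidual_sq_le (r := fun t i ω => et t i ω + q t i ω)
    hGmeas hp' hQmeas hCmeas hx0 (by simp [het0, hq0]) hx' hr' hseedMeas hseedIndep hseedLaw
    hGmean hGvar (sq_nonneg G) hgradbound ENNReal.ofReal_ne_top ENNReal.ofReal_ne_top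
    (fun a => by simpa only [ENNReal.ofReal_mul hδ0.le, ofReal_norm_sq] using hQvar a) hCmean
    (fun b => by simpa only [ENNReal.ofReal_mul hθ, ofReal_norm_sq] using hCvar b) hlam
    (hK ▸ div_nonneg (by positivity) (by linarith))
    (error_bound_invariant hθ hδ0 hδ1 hc0 hc1 hlam hδeq hK) t).trans
    (residual_constant_le hθ hδ0.le hc1 hlam hK)

/-- **iConEF-v2 residual bound (Lemma 6).**
Under iConEF-v2 (`p t i = η • g t i + ẽ t i + q t i`, `Δ t i = Q (p t i)`,
`x (t+1) = x t - (1/N) • ∑ i, Δ t i`, `ẽ (t+1) i = Q (p t i - Δ t i)`,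
`q (t+1) i = C (p t i - Δ t i - ẽ (t+1) i)`, `ẽ 0 i = q 0 i = 0`), with unbiased
stochastic gradients of variance `≤ σ²`, `E[‖∇f(x t)‖²] ≤ G²`, fresh independent
seeds (hence conditional independence across the `N` workers), an unbiased error
compressor `C` with `E[‖C a - a‖²|a] ≤ θ‖a‖²`, and a gradient compressor `Q` with
`E[‖Q a - a‖²|a] ≤ δ‖a‖²` where `δ = c/((1+λ)(1+√θ)²)` for some `c ∈ (0,1)`,
`λ > 0`: defining `ζ t i = (ẽ (t+1) i + q (t+1) i) - p t i + Δ t i`, for every `t`,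
`E[‖(1/N) ∑ i, ζ t i‖²] ≤ ((1-c+c/λ)/(1-c)) · 2δ²θη²(σ²+G²)/N`. -/
theorem iconef_v2_residual_bound
    (d N : ℕ) (hN : 0 < N)
    (σ G δ θ c lam η : ℝ)
    (hσ : 0 ≤ σ) (hG : 0 ≤ G) (hθ : 0 ≤ θ)
    (hδ0 : 0 < δ) (hδ1 : δ < 1) (hc : c ∈ Set.Ioo (0 : ℝ) 1) (hlam : 0 < lam)
    (hδeq : δ = c / ((1 + lam) * (1 + Real.sqrt θ) ^ 2))
    (hη : 0 < η)
    (f : EuclideanSpace ℝ (Fin d) → ℝ) (hf : Differentiable ℝ f)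
    -- seed spaces for the stochastic gradients and the compressor calls
    {Ωg ΩQ ΩC : Type} [MeasurableSpace Ωg] [MeasurableSpace ΩQ] [MeasurableSpace ΩC]
    (νg : Measure Ωg) (νQ : Measure ΩQ) (νC : Measure ΩC)
    [IsProbabilityMeasure νg] [IsProbabilityMeasure νQ] [IsProbabilityMeasure νC]
    (G' : ℕ → Fin N → EuclideanSpace ℝ (Fin d) → Ωg → EuclideanSpace ℝ (Fin d))
    (Q : EuclideanSpace ℝ (Fin d) → ΩQ → EuclideanSpace ℝ (Fin d))
    (C : EuclideanSpace ℝ (Fin d) → ΩC → EuclideanSpace ℝ (Fin d))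
    (hGmeas : ∀ t i, Measurable (Function.uncurry (G' t i)))
    (hQmeas : Measurable (Function.uncurry Q))
    (hCmeas : Measurable (Function.uncurry C))
    -- Assumption 2: unbiased stochastic gradients with bounded variance
    (hGmean : ∀ t i a, ∫ ω, G' t i a ω ∂νg = gradient f a)
    (hGvar : ∀ t i a,
      ∫⁻ ω, (‖G' t i a ω - gradient f a‖₊ : ℝ≥0∞) ^ 2 ∂νg ≤ ENNReal.ofReal (σ ^ 2))
    -- Assumption 4: contractive gradient compressor
    (hQvar : ∀ a, ∫⁻ ω, (‖Q a ω - a‖₊ : ℝ≥0∞) ^ 2 ∂νQ ≤ ENNReal.ofReal (δ * ‖a‖ ^ 2))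
    -- Assumption 3: unbiased error compressor
    (hCmean : ∀ a, ∫ ω, C a ω ∂νC = a)
    (hCvar : ∀ a, ∫⁻ ω, (‖C a ω - a‖₊ : ℝ≥0∞) ^ 2 ∂νC ≤ ENNReal.ofReal (θ * ‖a‖ ^ 2))
    -- the underlying sample space carrying i.i.d. fresh seeds for every (t, i):
    -- one gradient seed and two Q seeds plus one C seed per step
    {Ω : Type} [MeasurableSpace Ω] (μ : Measure Ω) [IsProbabilityMeasure μ]
    (seed : ℕ → Fin N → Ω → Ωg × ΩQ × ΩQ × ΩC)
    (hseedMeas : ∀ t i, Measurable (seed t i))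
    (hseedLaw : ∀ t i, Measure.map (seed t i) μ = νg.prod (νQ.prod (νQ.prod νC)))
    (hseedIndep : iIndepFun
      (fun q : ℕ × Fin N => seed q.1 q.2) μ)
    -- the iConEF-v2 trajectories
    (x0 : EuclideanSpace ℝ (Fin d))
    (x : ℕ → Ω → EuclideanSpace ℝ (Fin d))
    (et q g p Δ : ℕ → Fin N → Ω → EuclideanSpace ℝ (Fin d))
    (hx0 : ∀ ω, x 0 ω = x0)
    (het0 : ∀ i ω, et 0 i ω = 0)
    (hq0 : ∀ i ω, q 0 i ω = 0)
    (hg : ∀ t i ω, g t i ω = G' t i (x t ω) (seed t i ω).1)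
    (hp : ∀ t i ω, p t i ω = η • g t i ω + et t i ω + q t i ω)
    (hΔ : ∀ t i ω, Δ t i ω = Q (p t i ω) (seed t i ω).2.1)
    (hx : ∀ t ω, x (t + 1) ω = x t ω - (N : ℝ)⁻¹ • ∑ i, Δ t i ω)
    (het : ∀ t i ω, et (t + 1) i ω = Q (p t i ω - Δ t i ω) (seed t i ω).2.2.1)
    (hq : ∀ t i ω,
      q (t + 1) i ω = C (p t i ω - Δ t i ω - et (t + 1) i ω) (seed t i ω).2.2.2)
    -- Assumption 2: bounded expected squared gradient norm
    (hgradbound : ∀ t,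
      ∫⁻ ω, (‖gradient f (x t ω)‖₊ : ℝ≥0∞) ^ 2 ∂μ ≤ ENNReal.ofReal (G ^ 2))
    -- the combined error-compression residual
    (ζ : ℕ → Fin N → Ω → EuclideanSpace ℝ (Fin d))
    (hζ : ∀ t i ω,
      ζ t i ω = et (t + 1) i ω + q (t + 1) i ω - p t i ω + Δ t i ω) :
    ∀ t : ℕ,
      ∫⁻ ω, (‖(N : ℝ)⁻¹ • ∑ i, ζ t i ω‖₊ : ℝ≥0∞) ^ 2 ∂μ
        ≤ ENNReal.ofReal (((1 - c + c / lam) / (1 - c)) *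
            (2 * δ ^ 2 * θ * η ^ 2 * (σ ^ 2 + G ^ 2) / (N : ℝ))) :=
  iconef_v2_residual_bound_general d N σ G δ θ c lam η hθ hδ0 hδ1 hc hlam hδeq f νg νQ νC G' Q C
    hGmeas hQmeas hCmeas hGmean hGvar hQvar hCmean hCvar μ seed hseedMeas hseedLaw hseedIndep x0 x
    et q g p Δ hx0 het0 hq0 hg hp hΔ hx het hq hgradbound ζ hζ
end

section
/- Let u ∈ ℝ^d and let C be a random unbiased compressor with E[C(x) | x] = x and E[||C(x) − x||² | x] ≤ θ||x||² for some θ ≥ 0. Form the two-stage compression e = ẽ + q, where ẽ = C(u) and q = C(u − ẽ), the two calls to C using independent randomness. Then E[e] = u and E[||e − u||²] ≤ θ²||u||². -/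
open MeasureTheory
open scoped ENNReal NNReal

/-!
Given the first seed `ω₁`, the second stage compresses the residual `r = x - C₁ x ω₁`, so the
total error `C₁ x ω₁ + C₂ r ω₂ - x = C₂ r ω₂ - r` is exactly the error of the second stage. Its
mean over `ω₂` vanishes, and its second moment over `ω₂` is at most `κ₂ ‖r‖²`, whose mean over
`ω₁` is at most `κ₂ κ₁ ‖x‖²`. Integrability everywhere comes from these second-moment bounds.
-/

theorem MeasureTheory.Integrable.of_lintegral_enorm_sub_sq_lt_top {Ω E : Type*}
    [MeasurableSpace Ω] [NormedAddCommGroup E] {μ : Measure Ω} [IsFiniteMeasure μ]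
    {f : Ω → E} (c : E) (hf : AEStronglyMeasurable f μ)
    (h : ∫⁻ ω, ‖f ω - c‖ₑ ^ 2 ∂μ < ∞) : Integrable f μ := by
  have hL2 : MemLp (fun ω => f ω - c) 2 μ := by
    refine ⟨hf.sub aestronglyMeasurable_const, ?_⟩
    rw [eLpNorm_lt_top_iff_lintegral_rpow_enorm_lt_top two_ne_zero ENNReal.ofNat_ne_top]
    simpa using h
  simpa using (integrable_add_const_iff (c := c)).mpr (hL2.integrable one_le_two)

theorem ENNReal.ofReal_mul_norm_sq {E : Type*} [SeminormedAddCommGroup E] (a : ℝ) (x : E) :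
    ENNReal.ofReal (a * ‖x‖ ^ 2) = ENNReal.ofReal a * ‖x‖ₑ ^ 2 := by
  rw [ENNReal.ofReal_mul' (by positivity), ENNReal.ofReal_pow (norm_nonneg x), ofReal_norm]

section TwoStage

variable {Ω₁ Ω₂ E : Type*} [AddCommGroup E]

def twoStageCompressor (C₁ : E → Ω₁ → E) (C₂ : E → Ω₂ → E) (x : E) (ω : Ω₁ × Ω₂) : E :=
  C₁ x ω.1 + C₂ (x - C₁ x ω.1) ω.2

theorem twoStageCompressor_sub_self (C₁ : E → Ω₁ → E) (C₂ : E → Ω₂ → E) (x : E)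
    (ω : Ω₁ × Ω₂) :
    twoStageCompressor C₁ C₂ x ω - x = C₂ (x - C₁ x ω.1) ω.2 - (x - C₁ x ω.1) := by
  rw [twoStageCompressor]
  abel

end TwoStage

/-- The randomness of the compressor is the argument `ω ∼ ν`. For finite `ν` the variance bound
makes `C x` integrable (`IsUnbiasedCompressor.integrable`), so `integral_eq` cannot hold through
the junk value of the Bochner integral. -/
structure IsUnbiasedCompressor {Ω E : Type*} [MeasurableSpace Ω] [NormedAddCommGroup E]
    [NormedSpace ℝ E] [MeasurableSpace E] (ν : Measure Ω) (κ : ℝ≥0) (C : E → Ω → E) : Prop where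
  measurable : Measurable (Function.uncurry C)
  integral_eq : ∀ x, ∫ ω, C x ω ∂ν = x
  lintegral_enorm_sub_sq_le : ∀ x, ∫⁻ ω, ‖C x ω - x‖ₑ ^ 2 ∂ν ≤ κ * ‖x‖ₑ ^ 2

namespace IsUnbiasedCompressor

variable {Ω Ω₁ Ω₂ E : Type*} [MeasurableSpace Ω] [MeasurableSpace Ω₁] [MeasurableSpace Ω₂]
  [NormedAddCommGroup E] [NormedSpace ℝ E] [MeasurableSpace E]

theorem measurable_apply {ν : Measure Ω} {κ : ℝ≥0} {C : E → Ω → E}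
    (hC : IsUnbiasedCompressor ν κ C) (x : E) : Measurable (C x) :=
  hC.measurable.comp measurable_prodMk_left

variable [BorelSpace E] {μ : Measure Ω₁} {ν : Measure Ω₂} {κ₁ κ₂ : ℝ≥0} {C₁ : E → Ω₁ → E}
  {C₂ : E → Ω₂ → E}

theorem lintegral_enorm_twoStageCompressor_sub_sq_le (h₁ : IsUnbiasedCompressor μ κ₁ C₁)
    (h₂ : IsUnbiasedCompressor ν κ₂ C₂) (x : E) :
    ∫⁻ ω, ‖twoStageCompressor C₁ C₂ x ω - x‖ₑ ^ 2 ∂μ.prod ν ≤ ↑(κ₂ * κ₁) * ‖x‖ₑ ^ 2 := by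
  simp only [twoStageCompressor_sub_self]
  calc ∫⁻ ω, ‖C₂ (x - C₁ x ω.1) ω.2 - (x - C₁ x ω.1)‖ₑ ^ 2 ∂μ.prod ν
      ≤ ∫⁻ ω₁, ∫⁻ ω₂, ‖C₂ (x - C₁ x ω₁) ω₂ - (x - C₁ x ω₁)‖ₑ ^ 2 ∂ν ∂μ :=
        lintegral_prod_le _
    _ ≤ ∫⁻ ω₁, κ₂ * ‖C₁ x ω₁ - x‖ₑ ^ 2 ∂μ := by
        gcongr with ω₁
        rw [← enorm_neg, neg_sub]
        exact h₂.lintegral_enorm_sub_sq_le _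
    _ = κ₂ * ∫⁻ ω₁, ‖C₁ x ω₁ - x‖ₑ ^ 2 ∂μ :=
        lintegral_const_mul _ (((h₁.measurable_apply x).sub_const x).enorm.pow_const 2)
    _ ≤ κ₂ * (κ₁ * ‖x‖ₑ ^ 2) := by gcongr; exact h₁.lintegral_enorm_sub_sq_le x
    _ = ↑(κ₂ * κ₁) * ‖x‖ₑ ^ 2 := by push_cast; ring

variable [SecondCountableTopology E]

theorem integrable {ν : Measure Ω} [IsFiniteMeasure ν] {κ : ℝ≥0} {C : E → Ω → E}
    (hC : IsUnbiasedCompressor ν κ C) (x : E) : Integrable (C x) ν :=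
  .of_lintegral_enorm_sub_sq_lt_top x (hC.measurable_apply x).aestronglyMeasurable <|
    (hC.lintegral_enorm_sub_sq_le x).trans_lt (by finiteness)

theorem measurable_twoStageCompressor (h₁ : IsUnbiasedCompressor μ κ₁ C₁)
    (h₂ : IsUnbiasedCompressor ν κ₂ C₂) :
    Measurable (Function.uncurry (twoStageCompressor C₁ C₂)) := by
  have hfirst : Measurable fun p : E × (Ω₁ × Ω₂) => C₁ p.1 p.2.1 :=
    h₁.measurable.comp (measurable_fst.prodMk measurable_snd.fst)
  exact hfirst.add <| h₂.measurable.comp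
    ((measurable_fst.sub hfirst).prodMk measurable_snd.snd)

theorem integral_twoStageCompressor [CompleteSpace E] [IsProbabilityMeasure μ]
    [IsProbabilityMeasure ν] (h₁ : IsUnbiasedCompressor μ κ₁ C₁)
    (h₂ : IsUnbiasedCompressor ν κ₂ C₂) (x : E) :
    ∫ ω, twoStageCompressor C₁ C₂ x ω ∂μ.prod ν = x := by
  have hint : Integrable (twoStageCompressor C₁ C₂ x) (μ.prod ν) :=
    .of_lintegral_enorm_sub_sq_lt_top x
      ((h₁.measurable_twoStageCompressor h₂).comp measurable_prodMk_left).aestronglyMeasurable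
      ((h₁.lintegral_enorm_twoStageCompressor_sub_sq_le h₂ x).trans_lt (by finiteness))
  have hinner (ω₁ : Ω₁) : ∫ ω₂, twoStageCompressor C₁ C₂ x (ω₁, ω₂) ∂ν = x := by
    simp only [twoStageCompressor]
    rw [integral_add (integrable_const _) (h₂.integrable _), h₂.integral_eq,
      integral_const, probReal_univ, one_smul, add_sub_cancel]
  rw [integral_prod _ hint]
  simp only [hinner, integral_const, probReal_univ, one_smul]

theorem twoStage [CompleteSpace E] [IsProbabilityMeasure μ] [IsProbabilityMeasure ν]
    (h₁ : IsUnbiasedCompressor μ κ₁ C₁) (h₂ : IsUnbiasedCompressor ν κ₂ C₂) :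
    IsUnbiasedCompressor (μ.prod ν) (κ₂ * κ₁) (twoStageCompressor C₁ C₂) where
  measurable := h₁.measurable_twoStageCompressor h₂
  integral_eq := h₁.integral_twoStageCompressor h₂
  lintegral_enorm_sub_sq_le := h₁.lintegral_enorm_twoStageCompressor_sub_sq_le h₂

end IsUnbiasedCompressor

/-- **Two-stage unbiased compression.**
Let `C` be a random unbiased compressor with `E[C x] = x` and
`E[‖C x - x‖²] ≤ θ‖x‖²` (θ ≥ 0), where the randomness of each call is drawn from a
probability measure `ν` (fresh and independent across the two calls, modeled by the
product measure `ν.prod ν`).  For `u ∈ ℝ^d`, setting `ẽ = C u` (first seed) and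
`q = C (u - ẽ)` (second seed), the sum `e = ẽ + q` satisfies `E[e] = u` and
`E[‖e - u‖²] ≤ θ²‖u‖²`. -/
theorem two_stage_unbiased_compression
    (d : ℕ) (θ : ℝ) (hθ : 0 ≤ θ)
    {ΩC : Type*} [MeasurableSpace ΩC] (ν : Measure ΩC) [IsProbabilityMeasure ν]
    (C : EuclideanSpace ℝ (Fin d) → ΩC → EuclideanSpace ℝ (Fin d))
    (hCmeas : Measurable (Function.uncurry C))
    (hCmean : ∀ x, ∫ ω, C x ω ∂ν = x)
    (hCvar : ∀ x, ∫⁻ ω, (‖C x ω - x‖₊ : ℝ≥0∞) ^ 2 ∂ν ≤ ENNReal.ofReal (θ * ‖x‖ ^ 2))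
    (u : EuclideanSpace ℝ (Fin d))
    (e : ΩC × ΩC → EuclideanSpace ℝ (Fin d))
    (he : ∀ ω : ΩC × ΩC, e ω = C u ω.1 + C (u - C u ω.1) ω.2) :
    (∫ ω, e ω ∂(ν.prod ν)) = u ∧
      ∫⁻ ω, (‖e ω - u‖₊ : ℝ≥0∞) ^ 2 ∂(ν.prod ν) ≤ ENNReal.ofReal (θ ^ 2 * ‖u‖ ^ 2) := by
  have hC : IsUnbiasedCompressor ν θ.toNNReal C :=
    ⟨hCmeas, hCmean, fun x => (hCvar x).trans_eq (ENNReal.ofReal_mul_norm_sq θ x)⟩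
  obtain rfl : e = twoStageCompressor C C u := funext he
  have h := hC.twoStage hC
  refine ⟨h.integral_eq u, (h.lintegral_enorm_sub_sq_le u).trans_eq ?_⟩
  rw [ENNReal.coe_mul, ← sq, ENNReal.ofReal_mul_norm_sq, ENNReal.ofReal_pow hθ]
  rfl
end

section
/- Let u ∈ ℝ^d, let Q be a random compressor with E[||Q(x) − x||² | x] ≤ δ||x||² for some δ ∈ (0,1), and let C be a random unbiased compressor with E[C(x) | x] = x and E[||C(x) − x||² | x] ≤ θ||x||² for some θ ≥ 0. Form e = ẽ + q, where ẽ = Q(u) and q = C(u − ẽ), the two compressor calls using independent randomness. Then E[e] = u and E[||e − u||²] ≤ δθ||u||². -/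
open MeasureTheory
open scoped ENNReal

/-!
The error `e - u` equals `C r - r` for the residual `r = u - Q u`. Since the randomness of `C`
is independent of `r`, Fubini lets us first average over `C` with `r` fixed: unbiasedness makes
the error centred, and the variance bound of `C` followed by the contraction bound of `Q` gives
`E‖C r - r‖² ≤ θ E‖r‖² ≤ θ δ ‖u‖²`.
-/

theorem integrable_of_lintegral_nnnorm_sq_lt_top {Ω E : Type*} [MeasurableSpace Ω]
    {μ : Measure Ω} [IsFiniteMeasure μ] [NormedAddCommGroup E] {g : Ω → E}
    (hg : AEStronglyMeasurable g μ) (h : ∫⁻ ω, (‖g ω‖₊ : ℝ≥0∞) ^ 2 ∂μ < ∞) :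
    Integrable g μ := by
  have hL2 : MemLp g 2 μ :=
    ⟨hg, (eLpNorm_lt_top_iff_lintegral_rpow_enorm_lt_top two_ne_zero ENNReal.ofNat_ne_top).2
      (by simpa [enorm_eq_nnnorm] using h)⟩
  exact hL2.integrable one_le_two

section CompressionError

variable {E Ω Ω' : Type*} [NormedAddCommGroup E] [MeasurableSpace Ω] [MeasurableSpace Ω']
  {μ : Measure Ω} {ν : Measure Ω'}

def compressionError (C : E → Ω' → E) (X : Ω → E) (ω : Ω × Ω') : E :=
  C (X ω.1) ω.2 - X ω.1

theorem lintegral_nnnorm_compressionError_sq_le {C : E → Ω' → E} {θ : ℝ} (hθ : 0 ≤ θ)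
    (hC : ∀ x, ∫⁻ ω, (‖C x ω - x‖₊ : ℝ≥0∞) ^ 2 ∂ν ≤ ENNReal.ofReal (θ * ‖x‖ ^ 2))
    (X : Ω → E) :
    ∫⁻ ω, (‖compressionError C X ω‖₊ : ℝ≥0∞) ^ 2 ∂(μ.prod ν) ≤
      ENNReal.ofReal θ * ∫⁻ ω, (‖X ω‖₊ : ℝ≥0∞) ^ 2 ∂μ := by
  have hbound : ∀ x : E,
      ENNReal.ofReal (θ * ‖x‖ ^ 2) = ENNReal.ofReal θ * (‖x‖₊ : ℝ≥0∞) ^ 2 := by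
    intro x
    rw [ENNReal.ofReal_mul hθ, ENNReal.ofReal_pow (norm_nonneg _), ofReal_norm, enorm_eq_nnnorm]
  calc ∫⁻ ω, (‖compressionError C X ω‖₊ : ℝ≥0∞) ^ 2 ∂(μ.prod ν)
      ≤ ∫⁻ ω₁, ∫⁻ ω₂, (‖C (X ω₁) ω₂ - X ω₁‖₊ : ℝ≥0∞) ^ 2 ∂ν ∂μ := lintegral_prod_le _
    _ ≤ ∫⁻ ω₁, ENNReal.ofReal θ * (‖X ω₁‖₊ : ℝ≥0∞) ^ 2 ∂μ :=
        lintegral_mono fun ω₁ => (hC (X ω₁)).trans_eq (hbound _)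
    _ = ENNReal.ofReal θ * ∫⁻ ω, (‖X ω‖₊ : ℝ≥0∞) ^ 2 ∂μ :=
        lintegral_const_mul' _ _ ENNReal.ofReal_ne_top

theorem integral_compressionError_eq_zero [NormedSpace ℝ E] [CompleteSpace E] [SFinite μ]
    [IsProbabilityMeasure ν]
    {C : E → Ω' → E} {X : Ω → E} (hCmean : ∀ x, ∫ ω, C x ω ∂ν = x)
    (hint : Integrable (compressionError C X) (μ.prod ν)) :
    ∫ ω, compressionError C X ω ∂(μ.prod ν) = 0 := by
  rw [integral_prod _ hint]
  refine integral_eq_zero_of_ae ?_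
  filter_upwards [hint.prod_right_ae] with ω₁ hslice
  have hCint : Integrable (C (X ω₁)) ν := by
    simpa only [compressionError, sub_add_cancel] using
      (integrable_add_const_iff (c := X ω₁)).mpr hslice
  simp only [compressionError, Pi.zero_apply]
  rw [integral_sub hCint (integrable_const _), hCmean, integral_const, probReal_univ, one_smul,
    sub_self]

variable [MeasurableSpace E] [BorelSpace E] [SecondCountableTopology E]

theorem integrable_compressionError [IsFiniteMeasure μ] [IsFiniteMeasure ν]
    {C : E → Ω' → E} {X : Ω → E} {θ : ℝ} (hCmeas : Measurable (Function.uncurry C))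
    (hX : Measurable X) (hθ : 0 ≤ θ)
    (hC : ∀ x, ∫⁻ ω, (‖C x ω - x‖₊ : ℝ≥0∞) ^ 2 ∂ν ≤ ENNReal.ofReal (θ * ‖x‖ ^ 2))
    (hX2 : ∫⁻ ω, (‖X ω‖₊ : ℝ≥0∞) ^ 2 ∂μ < ∞) :
    Integrable (compressionError C X) (μ.prod ν) := by
  have hmeas : Measurable (compressionError C X) :=
    (hCmeas.comp ((hX.comp measurable_fst).prodMk measurable_snd)).sub (hX.comp measurable_fst)
  refine integrable_of_lintegral_nnnorm_sq_lt_top hmeas.aestronglyMeasurable ?_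
  exact (lintegral_nnnorm_compressionError_sq_le hθ hC X).trans_lt
    (ENNReal.mul_lt_top ENNReal.ofReal_lt_top hX2)

end CompressionError

theorem contractive_then_unbiased_compression_general
    (d : ℕ) (δ θ : ℝ) (hθ : 0 ≤ θ)
    {ΩQ ΩC : Type*} [MeasurableSpace ΩQ] [MeasurableSpace ΩC]
    (νQ : Measure ΩQ) (νC : Measure ΩC)
    [IsProbabilityMeasure νQ] [IsProbabilityMeasure νC]
    (Q : EuclideanSpace ℝ (Fin d) → ΩQ → EuclideanSpace ℝ (Fin d))
    (C : EuclideanSpace ℝ (Fin d) → ΩC → EuclideanSpace ℝ (Fin d))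
    (hQmeas : Measurable (Function.uncurry Q))
    (hCmeas : Measurable (Function.uncurry C))
    (hQvar : ∀ x, ∫⁻ ω, (‖Q x ω - x‖₊ : ℝ≥0∞) ^ 2 ∂νQ ≤ ENNReal.ofReal (δ * ‖x‖ ^ 2))
    (hCmean : ∀ x, ∫ ω, C x ω ∂νC = x)
    (hCvar : ∀ x, ∫⁻ ω, (‖C x ω - x‖₊ : ℝ≥0∞) ^ 2 ∂νC ≤ ENNReal.ofReal (θ * ‖x‖ ^ 2))
    (u : EuclideanSpace ℝ (Fin d))
    (e : ΩQ × ΩC → EuclideanSpace ℝ (Fin d))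
    (he : ∀ ω : ΩQ × ΩC, e ω = Q u ω.1 + C (u - Q u ω.1) ω.2) :
    (∫ ω, e ω ∂(νQ.prod νC)) = u ∧
      ∫⁻ ω, (‖e ω - u‖₊ : ℝ≥0∞) ^ 2 ∂(νQ.prod νC) ≤ ENNReal.ofReal (δ * θ * ‖u‖ ^ 2) := by
  set r : ΩQ → EuclideanSpace ℝ (Fin d) := fun ω => u - Q u ω
  have herr : (fun ω => e ω - u) = compressionError C r := by
    funext ω
    simp only [he ω, compressionError, r]
    abel
  have hr : Measurable r := measurable_const.sub (hQmeas.comp measurable_prodMk_left)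
  have hr2 : ∫⁻ ω, (‖r ω‖₊ : ℝ≥0∞) ^ 2 ∂νQ ≤ ENNReal.ofReal (δ * ‖u‖ ^ 2) := by
    refine le_of_eq_of_le (lintegral_congr fun ω => ?_) (hQvar u)
    rw [← nnnorm_neg, neg_sub]
  have hvar : ∫⁻ ω, (‖e ω - u‖₊ : ℝ≥0∞) ^ 2 ∂(νQ.prod νC) ≤ ENNReal.ofReal (δ * θ * ‖u‖ ^ 2) :=
    calc ∫⁻ ω, (‖e ω - u‖₊ : ℝ≥0∞) ^ 2 ∂(νQ.prod νC)
        = ∫⁻ ω, (‖compressionError C r ω‖₊ : ℝ≥0∞) ^ 2 ∂(νQ.prod νC) := by rw [← herr]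
      _ ≤ ENNReal.ofReal θ * ∫⁻ ω, (‖r ω‖₊ : ℝ≥0∞) ^ 2 ∂νQ :=
          lintegral_nnnorm_compressionError_sq_le hθ hCvar r
      _ ≤ ENNReal.ofReal θ * ENNReal.ofReal (δ * ‖u‖ ^ 2) := by gcongr
      _ = ENNReal.ofReal (δ * θ * ‖u‖ ^ 2) := by rw [← ENNReal.ofReal_mul hθ]; ring_nf
  refine ⟨?_, hvar⟩
  have hint := integrable_compressionError hCmeas hr hθ hCvar (hr2.trans_lt ENNReal.ofReal_lt_top)
  have hmean := integral_compressionError_eq_zero hCmean hint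
  rw [← herr] at hint hmean
  calc ∫ ω, e ω ∂(νQ.prod νC) = ∫ ω, ((e ω - u) + u) ∂(νQ.prod νC) := by simp_rw [sub_add_cancel]
    _ = u := by
      rw [integral_add hint (integrable_const u), hmean, integral_const, probReal_univ, one_smul,
        zero_add]

/-- **Contractive-then-unbiased two-stage compression.**
Let `Q` be a random compressor with `E[‖Q x - x‖²] ≤ δ‖x‖²` (δ ∈ (0,1)) and `C` a
random unbiased compressor with `E[C x] = x` and `E[‖C x - x‖²] ≤ θ‖x‖²` (θ ≥ 0),
their randomness drawn from probability measures `νQ`, `νC` with independent fresh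
calls (modeled by `νQ.prod νC`).  For `u ∈ ℝ^d`, setting `ẽ = Q u` and
`q = C (u - ẽ)`, the sum `e = ẽ + q` satisfies `E[e] = u` and
`E[‖e - u‖²] ≤ δθ‖u‖²`. -/
theorem contractive_then_unbiased_compression
    (d : ℕ) (δ θ : ℝ) (hδ0 : 0 < δ) (hδ1 : δ < 1) (hθ : 0 ≤ θ)
    {ΩQ ΩC : Type*} [MeasurableSpace ΩQ] [MeasurableSpace ΩC]
    (νQ : Measure ΩQ) (νC : Measure ΩC)
    [IsProbabilityMeasure νQ] [IsProbabilityMeasure νC]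
    (Q : EuclideanSpace ℝ (Fin d) → ΩQ → EuclideanSpace ℝ (Fin d))
    (C : EuclideanSpace ℝ (Fin d) → ΩC → EuclideanSpace ℝ (Fin d))
    (hQmeas : Measurable (Function.uncurry Q))
    (hCmeas : Measurable (Function.uncurry C))
    (hQvar : ∀ x, ∫⁻ ω, (‖Q x ω - x‖₊ : ℝ≥0∞) ^ 2 ∂νQ ≤ ENNReal.ofReal (δ * ‖x‖ ^ 2))
    (hCmean : ∀ x, ∫ ω, C x ω ∂νC = x)
    (hCvar : ∀ x, ∫⁻ ω, (‖C x ω - x‖₊ : ℝ≥0∞) ^ 2 ∂νC ≤ ENNReal.ofReal (θ * ‖x‖ ^ 2))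
    (u : EuclideanSpace ℝ (Fin d))
    (e : ΩQ × ΩC → EuclideanSpace ℝ (Fin d))
    (he : ∀ ω : ΩQ × ΩC, e ω = Q u ω.1 + C (u - Q u ω.1) ω.2) :
    (∫ ω, e ω ∂(νQ.prod νC)) = u ∧
      ∫⁻ ω, (‖e ω - u‖₊ : ℝ≥0∞) ^ 2 ∂(νQ.prod νC) ≤ ENNReal.ofReal (δ * θ * ‖u‖ ^ 2) :=
  contractive_then_unbiased_compression_general d δ θ hθ νQ νC Q C hQmeas hCmeas hQvar hCmean hCvar
    u e he
end
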